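/- Let (X,d) be a metric space, γ, σ : [0,∞) → X geodesic rays with γ(0) = z, σ(0) = p, strongly asymptotic with shift T (i.e., d(γ(t),σ(t+T)) → 0 as t → ∞). Suppose (x_n) is a sequence in X and for each n there are geodesic segments from z to x_n converging uniformly on compacts to γ and geodesic segments from p to x_n converging uniformly on compacts to σ, with d(z,x_n) → ∞ and d(p,x_n) → ∞. Then lim_{n→∞} (d(z,x_n) − d(x_n,p)) = lim_{t→∞} (d(z,γ(t)) − d(γ(t),p)). -/
import Mathlib


open Filter

/-- If geodesic segments from `z` to `x_n` converge (uniformly on compacts) to a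
geodesic ray `γ`, geodesic segments from `p` to `x_n` converge to a geodesic ray `σ`,
`γ` and `σ` are strongly asymptotic with shift `T`, and `d(z,x_n), d(p,x_n) → ∞`,
then `lim_{n→∞}(d(z,x_n) - d(x_n,p)) = lim_{t→∞}(d(z,γ(t)) - d(γ(t),p))`. -/
theorem horofunction_limit_along_sequence {X : Type*} [MetricSpace X]
    (z p : X) (x : ℕ → X) (γ σ : ℝ → X) (T : ℝ)
    (hγ : ∀ s t : ℝ, 0 ≤ s → 0 ≤ t → dist (γ s) (γ t) = |s - t|)
    (hσ : ∀ s t : ℝ, 0 ≤ s → 0 ≤ t → dist (σ s) (σ t) = |s - t|)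
    (hγ0 : γ 0 = z) (hσ0 : σ 0 = p)
    (hasymp : Tendsto (fun t : ℝ => dist (γ t) (σ (t + T))) atTop (nhds 0))
    (η θ : ℕ → ℝ → X)
    -- η n is a geodesic segment from z to x n, extended as constant past its endpoint
    (hηgeo : ∀ n, ∀ s t : ℝ, 0 ≤ s → s ≤ dist z (x n) → 0 ≤ t → t ≤ dist z (x n) →
      dist (η n s) (η n t) = |s - t|)
    (hη0 : ∀ n, η n 0 = z) (hηend : ∀ n, ∀ t : ℝ, dist z (x n) ≤ t → η n t = x n)
    -- θ n is a geodesic segment from p to x n, extended as constant past its endpoint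
    (hθgeo : ∀ n, ∀ s t : ℝ, 0 ≤ s → s ≤ dist p (x n) → 0 ≤ t → t ≤ dist p (x n) →
      dist (θ n s) (θ n t) = |s - t|)
    (hθ0 : ∀ n, θ n 0 = p) (hθend : ∀ n, ∀ t : ℝ, dist p (x n) ≤ t → θ n t = x n)
    -- uniform-on-compacts convergence of the segments to the rays
    (hηconv : ∀ R : ℝ, 0 < R → ∀ ε : ℝ, 0 < ε → ∃ N : ℕ, ∀ n ≥ N,
      ∀ t ∈ Set.Icc (0:ℝ) R, dist (η n t) (γ t) < ε)
    (hθconv : ∀ R : ℝ, 0 < R → ∀ ε : ℝ, 0 < ε → ∃ N : ℕ, ∀ n ≥ N,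
      ∀ t ∈ Set.Icc (0:ℝ) R, dist (θ n t) (σ t) < ε)
    (hzx : Tendsto (fun n : ℕ => dist z (x n)) atTop atTop)
    (hpx : Tendsto (fun n : ℕ => dist p (x n)) atTop atTop)
    (L : ℝ)
    (hL : Tendsto (fun t : ℝ => dist z (γ t) - dist (γ t) p) atTop (nhds L)) :
    Tendsto (fun n : ℕ => dist z (x n) - dist (x n) p) atTop (nhds L) := by
  have hzγ : ∀ t : ℝ, 0 ≤ t → dist z (γ t) = t := by
    intro t ht
    rw [← hγ0, hγ 0 t le_rfl ht, abs_of_nonpos (by linarith)]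
    ring
  have hpσ : ∀ t : ℝ, 0 ≤ t → dist p (σ t) = t := by
    intro t ht
    rw [← hσ0, hσ 0 t le_rfl ht, abs_of_nonpos (by linarith)]
    ring
  -- First identify L = -T
  have hLT : L = -T := by
    refine tendsto_nhds_unique hL ?_
    rw [Metric.tendsto_atTop]
    intro ε hε
    obtain ⟨t₀, ht₀⟩ := Metric.tendsto_atTop.mp hasymp ε hε
    refine ⟨max t₀ (max 0 (-T)), fun t ht => ?_⟩
    have ht0 : 0 ≤ t := le_trans (le_trans (le_max_left _ _) (le_max_right _ _)) ht
    have htT : 0 ≤ t + T := by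
      have : -T ≤ t := le_trans (le_trans (le_max_right _ _) (le_max_right _ _)) ht
      linarith
    have hδ : dist (γ t) (σ (t + T)) < ε := by
      have := ht₀ t (le_trans (le_max_left _ _) ht)
      rwa [Real.dist_eq, sub_zero, abs_of_nonneg dist_nonneg] at this
    have h1 : dist (γ t) p ≤ dist (γ t) (σ (t + T)) + (t + T) := by
      have := dist_triangle (γ t) (σ (t + T)) p
      rw [dist_comm (σ (t + T)) p, hpσ (t + T) htT] at this
      linarith
    have h2 : (t + T) ≤ dist (γ t) (σ (t + T)) + dist (γ t) p := by
      have := dist_triangle p (γ t) (σ (t + T))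
      rw [hpσ (t + T) htT, dist_comm p (γ t)] at this
      linarith
    rw [Real.dist_eq, hzγ t ht0, abs_lt]
    constructor <;> linarith
  rw [hLT]
  rw [Metric.tendsto_atTop]
  intro ε hε
  have hε4 : 0 < ε / 4 := by linarith
  obtain ⟨t₀, ht₀⟩ := Metric.tendsto_atTop.mp hasymp (ε / 4) hε4
  set t := max t₀ (|T| + 1) with htdef
  have ht0 : 0 ≤ t := le_trans (by positivity) (le_max_right _ _)
  have htT : 0 ≤ t + T := by
    have h1 : |T| + 1 ≤ t := le_max_right _ _
    have h2 := neg_abs_le T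
    linarith
  have hδ : dist (γ t) (σ (t + T)) < ε / 4 := by
    have := ht₀ t (le_max_left _ _)
    rwa [Real.dist_eq, sub_zero, abs_of_nonneg dist_nonneg] at this
  have hR : (0:ℝ) < t + |T| + 1 := by positivity
  obtain ⟨N₁, hN₁⟩ := hηconv (t + |T| + 1) hR (ε / 4) hε4
  obtain ⟨N₂, hN₂⟩ := hθconv (t + |T| + 1) hR (ε / 4) hε4
  obtain ⟨N₃, hN₃⟩ := Filter.eventually_atTop.mp (Filter.tendsto_atTop.mp hzx t)
  obtain ⟨N₄, hN₄⟩ := Filter.eventually_atTop.mp (Filter.tendsto_atTop.mp hpx (t + T))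
  refine ⟨max (max N₁ N₂) (max N₃ N₄), fun n hn => ?_⟩
  have hn₁ : N₁ ≤ n := le_trans (le_trans (le_max_left _ _) (le_max_left _ _)) hn
  have hn₂ : N₂ ≤ n := le_trans (le_trans (le_max_right _ _) (le_max_left _ _)) hn
  have hn₃ : N₃ ≤ n := le_trans (le_trans (le_max_left _ _) (le_max_right _ _)) hn
  have hn₄ : N₄ ≤ n := le_trans (le_trans (le_max_right _ _) (le_max_right _ _)) hn
  have hd1 : t ≤ dist z (x n) := hN₃ n hn₃
  have hd2 : t + T ≤ dist p (x n) := hN₄ n hn₄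
  -- geodesic facts
  have hη2 : dist (η n t) (x n) = dist z (x n) - t := by
    have h := hηgeo n t (dist z (x n)) ht0 hd1 dist_nonneg le_rfl
    rw [hηend n (dist z (x n)) le_rfl, abs_of_nonpos (by linarith)] at h
    linarith
  have hθ2 : dist (θ n (t + T)) (x n) = dist p (x n) - (t + T) := by
    have h := hθgeo n (t + T) (dist p (x n)) htT hd2 dist_nonneg le_rfl
    rw [hθend n (dist p (x n)) le_rfl, abs_of_nonpos (by linarith)] at h
    linarith
  have hηc : dist (η n t) (γ t) < ε / 4 :=
    hN₁ n hn₁ t ⟨ht0, by have := abs_nonneg T; linarith⟩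
  have hθc : dist (θ n (t + T)) (σ (t + T)) < ε / 4 :=
    hN₂ n hn₂ (t + T) ⟨htT, by have := le_abs_self T; linarith⟩
  -- lower bound: dist z (x n) - dist (x n) p ≥ -T - ε/2 - ε/4
  have hlow : -T - 3 * (ε / 4) ≤ dist z (x n) - dist (x n) p := by
    have t1 : dist (x n) p ≤ dist (x n) (η n t) + dist (η n t) p := dist_triangle _ _ _
    have t2 : dist (η n t) p ≤ dist (η n t) (γ t) + dist (γ t) p := dist_triangle _ _ _
    have t3 : dist (γ t) p ≤ dist (γ t) (σ (t + T)) + dist (σ (t + T)) p :=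
      dist_triangle _ _ _
    rw [dist_comm (σ (t + T)) p, hpσ (t + T) htT] at t3
    rw [dist_comm (x n) (η n t), hη2] at t1
    linarith
  -- upper bound
  have hup : dist z (x n) - dist (x n) p ≤ -T + 3 * (ε / 4) := by
    have t1 : dist z (x n) ≤ dist z (θ n (t + T)) + dist (θ n (t + T)) (x n) :=
      dist_triangle _ _ _
    have t2 : dist z (θ n (t + T)) ≤ dist z (σ (t + T)) + dist (σ (t + T)) (θ n (t + T)) :=
      dist_triangle _ _ _
    have t3 : dist z (σ (t + T)) ≤ dist z (γ t) + dist (γ t) (σ (t + T)) :=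
      dist_triangle _ _ _
    rw [hzγ t ht0] at t3
    rw [dist_comm (σ (t + T)) (θ n (t + T))] at t2
    rw [hθ2] at t1
    rw [dist_comm (x n) p]
    linarith
  rw [Real.dist_eq, abs_lt]
  constructor <;> linarith
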